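/- arXiv:2207.08541 — 7 statements merged into one kernel-verified Lean document; each statement's English description precedes it below -/
import Mathlib

section
/- Invariance of the quadratic curvature energy under the Nye transform: let Γ be a real 3×3 matrix, α = −Γᵀ + tr(Γ)·1₃, and a₁, a₂, a₃ ∈ ℝ. Then a₁‖dev sym α‖² + a₂‖skew α‖² + a₃·(tr α)² = a₁‖dev sym Γ‖² + a₂‖skew Γ‖² + 4a₃·(tr Γ)², and this quantity further equals b₁‖sym Γ‖² + b₂‖skew Γ‖² + b₃·(tr Γ)² with b₁ = a₁, b₂ = a₂, b₃ = (12a₃ − a₁)/3. -/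
open Matrix

noncomputable section

/-- Squared Frobenius norm `‖X‖² = tr (X Xᵀ)`. -/
def normSq (X : Matrix (Fin 3) (Fin 3) ℝ) : ℝ := Matrix.trace (X * Xᵀ)

/-- Symmetric part. -/
def sym3 (X : Matrix (Fin 3) (Fin 3) ℝ) : Matrix (Fin 3) (Fin 3) ℝ := ((1 : ℝ)/2) • (X + Xᵀ)

/-- Skew-symmetric part. -/
def skew3 (X : Matrix (Fin 3) (Fin 3) ℝ) : Matrix (Fin 3) (Fin 3) ℝ := ((1 : ℝ)/2) • (X - Xᵀ)

/-- Deviatoric part. -/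
def dev3 (X : Matrix (Fin 3) (Fin 3) ℝ) : Matrix (Fin 3) (Fin 3) ℝ :=
  X - ((Matrix.trace X)/3) • (1 : Matrix (Fin 3) (Fin 3) ℝ)

lemma L1 (X : Matrix (Fin 3) (Fin 3) ℝ) :
    normSq (dev3 X) = normSq X - (Matrix.trace X)^2/3 := by
  simp [normSq, dev3, Matrix.sub_mul, Matrix.mul_sub, transpose_sub, transpose_smul,
    transpose_one, Matrix.smul_mul, Matrix.mul_smul, Matrix.trace_sub, Matrix.trace_smul,
    Matrix.trace_one, Matrix.trace_transpose, smul_eq_mul]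
  ring

lemma L2 (X : Matrix (Fin 3) (Fin 3) ℝ) : Matrix.trace (sym3 X) = Matrix.trace X := by
  simp [sym3, Matrix.trace_add, Matrix.trace_smul, Matrix.trace_transpose, smul_eq_mul]
  ring

lemma L3 (Γ : Matrix (Fin 3) (Fin 3) ℝ) :
    sym3 (-Γᵀ + (Matrix.trace Γ) • (1 : Matrix (Fin 3) (Fin 3) ℝ))
      = (Matrix.trace Γ) • (1 : Matrix (Fin 3) (Fin 3) ℝ) - sym3 Γ := by
  unfold sym3
  simp [transpose_add, transpose_neg, transpose_smul, transpose_one, transpose_transpose]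
  module

lemma L4 (Γ : Matrix (Fin 3) (Fin 3) ℝ) :
    skew3 (-Γᵀ + (Matrix.trace Γ) • (1 : Matrix (Fin 3) (Fin 3) ℝ)) = skew3 Γ := by
  unfold skew3
  simp [transpose_add, transpose_neg, transpose_smul, transpose_one, transpose_transpose]
  module

lemma L5 (S : Matrix (Fin 3) (Fin 3) ℝ) (c : ℝ) (hS : Sᵀ = S) :
    normSq (c • (1 : Matrix (Fin 3) (Fin 3) ℝ) - S) = normSq S - 2*c*Matrix.trace S + 3*c^2 := by
  simp [normSq, Matrix.sub_mul, Matrix.mul_sub, transpose_sub, transpose_smul, transpose_one,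
    Matrix.smul_mul, Matrix.mul_smul, Matrix.trace_sub, Matrix.trace_smul, Matrix.trace_one,
    hS, smul_eq_mul]
  ring

lemma L6 (X : Matrix (Fin 3) (Fin 3) ℝ) : (sym3 X)ᵀ = sym3 X := by
  simp [sym3, transpose_add, transpose_smul, transpose_transpose, add_comm]

lemma L7 (Γ : Matrix (Fin 3) (Fin 3) ℝ) :
    Matrix.trace (-Γᵀ + (Matrix.trace Γ) • (1 : Matrix (Fin 3) (Fin 3) ℝ)) = 2 * Matrix.trace Γ := by
  simp [Matrix.trace_add, Matrix.trace_neg, Matrix.trace_smul, Matrix.trace_transpose,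
    Matrix.trace_one, smul_eq_mul]
  ring

theorem curvature_energy_nye_invariance (Γ α : Matrix (Fin 3) (Fin 3) ℝ) (a₁ a₂ a₃ : ℝ)
    (hα : α = -Γᵀ + (Matrix.trace Γ) • (1 : Matrix (Fin 3) (Fin 3) ℝ)) :
    a₁ * normSq (dev3 (sym3 α)) + a₂ * normSq (skew3 α) + a₃ * (Matrix.trace α)^2
      = a₁ * normSq (dev3 (sym3 Γ)) + a₂ * normSq (skew3 Γ) + 4 * a₃ * (Matrix.trace Γ)^2 ∧
    a₁ * normSq (dev3 (sym3 Γ)) + a₂ * normSq (skew3 Γ) + 4 * a₃ * (Matrix.trace Γ)^2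
      = a₁ * normSq (sym3 Γ) + a₂ * normSq (skew3 Γ)
        + ((12 * a₃ - a₁)/3) * (Matrix.trace Γ)^2 := by
  subst hα
  rw [L1, L1, L2, L2, L3, L4, L5 _ _ (L6 Γ), L7, L2]
  constructor <;> ring

end
end

section
/- Multiplicative decomposition of the wryness along a curve: let R, Q₀ : ℝ → ℝ^{3×3} be differentiable at t₀ with R(t) ∈ SO(3) and Q₀(t) ∈ SO(3) for all t ∈ ℝ, and set Q_e(t) = R(t)·Q₀(t)ᵀ. Then Q_e is differentiable at t₀, the matrices Q_e(t₀)ᵀQ_e′(t₀), R(t₀)ᵀR′(t₀) and Q₀(t₀)ᵀQ₀′(t₀) are skew-symmetric, Q_e(t₀)ᵀQ_e′(t₀) = Q₀(t₀)(R(t₀)ᵀR′(t₀))Q₀(t₀)ᵀ − Q₀(t₀)(Q₀(t₀)ᵀQ₀′(t₀))Q₀(t₀)ᵀ, and consequently axl(Q_e(t₀)ᵀQ_e′(t₀)) = Q₀(t₀)·(axl(R(t₀)ᵀR′(t₀)) − axl(Q₀(t₀)ᵀQ₀′(t₀))). -/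
/-!
Differentiating `Mᵀ M = 1` shows that `Mᵀ M'` is skew for every curve `M` of orthogonal
matrices. The product rule and orthogonality turn `Q_eᵀ Q_e'` into the conjugate
`Q₀ (Rᵀ R' - Q₀ᵀ Q₀') Q₀ᵀ`. Finally, conjugation by any `Q` sends the skew matrix `[w]×` to
`[cof Q · w]×`, and the cofactor matrix `cof Q = (adj Q)ᵀ` equals `Q` when `Q ∈ SO(3)`.
-/

open Matrix

noncomputable section

/-- The axial vector `axl A = (A₃₂, A₁₃, A₂₁)` of a (skew-symmetric) matrix `A`,
characterized by `A v = axl A × v`. -/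
def axl (A : Matrix (Fin 3) (Fin 3) ℝ) : Fin 3 → ℝ := ![A 2 1, A 0 2, A 1 0]

section Deriv

variable {𝕜 : Type*} [NontriviallyNormedField 𝕜] {l m n : Type*} [Fintype m]

theorem hasDerivAt_matrix_mul_apply {A : 𝕜 → Matrix l m 𝕜} {B : 𝕜 → Matrix m n 𝕜}
    {A' : Matrix l m 𝕜} {B' : Matrix m n 𝕜} {t₀ : 𝕜}
    (hA : ∀ i j, HasDerivAt (fun t => A t i j) (A' i j) t₀)
    (hB : ∀ i j, HasDerivAt (fun t => B t i j) (B' i j) t₀) (i : l) (j : n) :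
    HasDerivAt (fun t => (A t * B t) i j) ((A' * B t₀ + A t₀ * B') i j) t₀ := by
  simp only [mul_apply, Matrix.add_apply, ← Finset.sum_add_distrib]
  exact HasDerivAt.fun_sum fun k _ => (hA i k).mul (hB k j)

theorem transpose_mul_deriv_transpose_eq_neg [Fintype n] [DecidableEq n]
    {M : 𝕜 → Matrix n n 𝕜} {M' : Matrix n n 𝕜} {t₀ : 𝕜} (hM1 : ∀ t, (M t)ᵀ * M t = 1)
    (hM : ∀ i j, HasDerivAt (fun t => M t i j) (M' i j) t₀) :
    ((M t₀)ᵀ * M')ᵀ = -((M t₀)ᵀ * M') := by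
  have hsum : M'ᵀ * M t₀ + (M t₀)ᵀ * M' = 0 := by
    ext i j
    have hconst : HasDerivAt (fun t => ((M t)ᵀ * M t) i j) 0 t₀ := by
      simp only [hM1]
      exact hasDerivAt_const _ _
    exact (hasDerivAt_matrix_mul_apply (fun i j => hM j i) hM i j).unique hconst
  rw [transpose_mul, transpose_transpose]
  exact eq_neg_of_add_eq_zero_left hsum

end Deriv

section Algebra

variable {α : Type*} [CommRing α] {n : Type*} [Fintype n]

theorem transpose_mul_mul_transpose_of_transpose_eq_neg {S : Matrix n n α} (Q : Matrix n n α)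
    (hS : Sᵀ = -S) : (Q * S * Qᵀ)ᵀ = -(Q * S * Qᵀ) := by
  rw [transpose_mul, transpose_mul, transpose_transpose, hS, Matrix.neg_mul, Matrix.mul_neg,
    Matrix.mul_assoc]

theorem transpose_mul_deriv_mul_transpose [DecidableEq n] {R Q Q' : Matrix n n α}
    (R' : Matrix n n α) (hR : Rᵀ * R = 1) (hQ : Qᵀ * Q = 1) (hQ' : (Qᵀ * Q')ᵀ = -(Qᵀ * Q')) :
    (R * Qᵀ)ᵀ * (R' * Qᵀ + R * Q'ᵀ) = Q * (Rᵀ * R' - Qᵀ * Q') * Qᵀ := by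
  have hQQ : Q * Qᵀ = 1 := mul_eq_one_comm.mp hQ
  have hQ'Q : Q'ᵀ * Q = -(Qᵀ * Q') := by rw [← hQ', transpose_mul, transpose_transpose]
  calc (R * Qᵀ)ᵀ * (R' * Qᵀ + R * Q'ᵀ)
      = Q * (Rᵀ * R') * Qᵀ + Q * (Rᵀ * R) * Q'ᵀ * (Q * Qᵀ) := by
        rw [hQQ, transpose_mul, transpose_transpose]
        simp only [Matrix.mul_add, Matrix.mul_one, Matrix.mul_assoc]
    _ = Q * (Rᵀ * R') * Qᵀ + Q * (Q'ᵀ * Q) * Qᵀ := by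
        rw [hR]
        simp only [Matrix.mul_one, Matrix.mul_assoc]
    _ = Q * (Rᵀ * R' - Qᵀ * Q') * Qᵀ := by
        rw [hQ'Q, sub_eq_add_neg, Matrix.mul_add, Matrix.add_mul]

theorem adjugate_eq_transpose [DecidableEq n] {Q : Matrix n n α} (hQ : Qᵀ * Q = 1)
    (hdet : Q.det = 1) : adjugate Q = Qᵀ :=
  left_inv_eq_left_inv (by rw [adjugate_mul, hdet, one_smul]) hQ

end Algebra

theorem axl_sub (A B : Matrix (Fin 3) (Fin 3) ℝ) : axl (A - B) = axl A - axl B := by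
  ext i
  fin_cases i <;> simp [axl]

theorem axl_mul_mul_transpose (Q : Matrix (Fin 3) (Fin 3) ℝ) {S : Matrix (Fin 3) (Fin 3) ℝ}
    (hS : Sᵀ = -S) : axl (Q * S * Qᵀ) = (adjugate Q)ᵀ *ᵥ axl S := by
  have hanti : ∀ i j, S j i = -S i j := fun i j => by simpa using congrFun (congrFun hS i) j
  have hdiag : ∀ i, S i i = 0 := fun i => by linarith [hanti i i]
  ext k
  fin_cases k <;>
    simp only [axl, mulVec, dotProduct, mul_apply, transpose_apply, Fin.sum_univ_three,
      adjugate_fin_three, of_apply, cons_val', cons_val_fin_one, cons_val_zero, cons_val_one,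
      cons_val, Fin.zero_eta, Fin.mk_one, Fin.reduceFinMk, Fin.isValue, hdiag, hanti 0 1,
      hanti 0 2, hanti 1 2] <;> ring

theorem wryness_multiplicative_decomposition
    (R Q₀ : ℝ → Matrix (Fin 3) (Fin 3) ℝ)
    (R' Q₀' : Matrix (Fin 3) (Fin 3) ℝ) (t₀ : ℝ)
    (hR : ∀ t, (R t)ᵀ * R t = 1 ∧ (R t).det = 1)
    (hQ₀ : ∀ t, (Q₀ t)ᵀ * Q₀ t = 1 ∧ (Q₀ t).det = 1)
    (hRderiv : ∀ i j, HasDerivAt (fun t => R t i j) (R' i j) t₀)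
    (hQ₀deriv : ∀ i j, HasDerivAt (fun t => Q₀ t i j) (Q₀' i j) t₀) :
    -- `Q_e(t) = R(t) Q₀(t)ᵀ` is differentiable at `t₀`,
    -- with derivative `Q_e'(t₀) = R' Q₀(t₀)ᵀ + R(t₀) Q₀'ᵀ`
    (∀ i j, HasDerivAt (fun t => (R t * (Q₀ t)ᵀ) i j)
        ((R' * (Q₀ t₀)ᵀ + R t₀ * Q₀'ᵀ) i j) t₀) ∧
    -- `Q_e(t₀)ᵀ Q_e'(t₀)` is skew-symmetric
    ((R t₀ * (Q₀ t₀)ᵀ)ᵀ * (R' * (Q₀ t₀)ᵀ + R t₀ * Q₀'ᵀ))ᵀ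
      = -((R t₀ * (Q₀ t₀)ᵀ)ᵀ * (R' * (Q₀ t₀)ᵀ + R t₀ * Q₀'ᵀ)) ∧
    -- `R(t₀)ᵀ R'(t₀)` is skew-symmetric
    ((R t₀)ᵀ * R')ᵀ = -((R t₀)ᵀ * R') ∧
    -- `Q₀(t₀)ᵀ Q₀'(t₀)` is skew-symmetric
    ((Q₀ t₀)ᵀ * Q₀')ᵀ = -((Q₀ t₀)ᵀ * Q₀') ∧
    -- the multiplicative decomposition
    (R t₀ * (Q₀ t₀)ᵀ)ᵀ * (R' * (Q₀ t₀)ᵀ + R t₀ * Q₀'ᵀ)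
      = Q₀ t₀ * ((R t₀)ᵀ * R') * (Q₀ t₀)ᵀ - Q₀ t₀ * ((Q₀ t₀)ᵀ * Q₀') * (Q₀ t₀)ᵀ ∧
    -- consequently, on the level of axial vectors
    axl ((R t₀ * (Q₀ t₀)ᵀ)ᵀ * (R' * (Q₀ t₀)ᵀ + R t₀ * Q₀'ᵀ))
      = (Q₀ t₀).mulVec (axl ((R t₀)ᵀ * R') - axl ((Q₀ t₀)ᵀ * Q₀')) := by
  have hQ := (hQ₀ t₀).1
  have hRskew := transpose_mul_deriv_transpose_eq_neg (fun t => (hR t).1) hRderiv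
  have hQskew := transpose_mul_deriv_transpose_eq_neg (fun t => (hQ₀ t).1) hQ₀deriv
  have hS : ((R t₀)ᵀ * R' - (Q₀ t₀)ᵀ * Q₀')ᵀ = -((R t₀)ᵀ * R' - (Q₀ t₀)ᵀ * Q₀') := by
    rw [transpose_sub, hRskew, hQskew, neg_sub_neg, neg_sub]
  have hdecomp := transpose_mul_deriv_mul_transpose R' (hR t₀).1 hQ hQskew
  refine ⟨hasDerivAt_matrix_mul_apply hRderiv (fun i j => hQ₀deriv j i), ?_, hRskew, hQskew,
    hdecomp.trans (by rw [Matrix.mul_sub, Matrix.sub_mul]), ?_⟩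
  · rw [hdecomp]
    exact transpose_mul_mul_transpose_of_transpose_eq_neg _ hS
  · rw [hdecomp, axl_mul_mul_transpose _ hS, adjugate_eq_transpose hQ (hQ₀ t₀).2,
      transpose_transpose, axl_sub]

end
end

section
/- Tangential-normal split of the shell energy: let n ∈ ℝ³ with ‖n‖ = 1 and let X be a real 3×3 matrix with X n = 0. With X∥ = (1₃ − n⊗n)X and X⊥ = (n⊗n)X, one has tr(X∥) = tr(X), ‖X⊥‖² = ‖Xᵀn‖², and for all μ, μ_c ∈ ℝ: μ‖sym X‖² + μ_c‖skew X‖² = μ‖sym X∥‖² + μ_c‖skew X∥‖² + ((μ + μ_c)/2)·‖Xᵀn‖². -/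
open Matrix

noncomputable section

/-- Squared Euclidean norm on ℝ³. -/
def vnormSq (v : Fin 3 → ℝ) : ℝ := ∑ i, v i ^ 2

/-- Rank-one matrix `v ⊗ n = v nᵀ`. -/
def outer (v n : Fin 3 → ℝ) : Matrix (Fin 3) (Fin 3) ℝ := Matrix.vecMulVec v n

lemma normSq_sym3 (A : Matrix (Fin 3) (Fin 3) ℝ) :
    normSq (sym3 A) = (1/2) * (Matrix.trace (A * Aᵀ) + Matrix.trace (A * A)) := by
  have h1 : Matrix.trace (Aᵀ * Aᵀ) = Matrix.trace (A * A) := by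
    rw [← Matrix.transpose_mul, Matrix.trace_transpose]
  have h2 : Matrix.trace (Aᵀ * A) = Matrix.trace (A * Aᵀ) := Matrix.trace_mul_comm _ _
  simp only [normSq, sym3, Matrix.transpose_smul, Matrix.transpose_add,
    Matrix.transpose_transpose, Matrix.smul_mul, Matrix.mul_smul, Matrix.add_mul,
    Matrix.mul_add, Matrix.trace_smul, Matrix.trace_add, smul_eq_mul]
  rw [h1, h2]; ring

lemma normSq_skew3 (A : Matrix (Fin 3) (Fin 3) ℝ) :
    normSq (skew3 A) = (1/2) * (Matrix.trace (A * Aᵀ) - Matrix.trace (A * A)) := by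
  have h1 : Matrix.trace (Aᵀ * Aᵀ) = Matrix.trace (A * A) := by
    rw [← Matrix.transpose_mul, Matrix.trace_transpose]
  have h2 : Matrix.trace (Aᵀ * A) = Matrix.trace (A * Aᵀ) := Matrix.trace_mul_comm _ _
  simp only [normSq, skew3, Matrix.transpose_smul, Matrix.transpose_sub,
    Matrix.transpose_transpose, Matrix.smul_mul, Matrix.mul_smul, Matrix.sub_mul,
    Matrix.mul_sub, Matrix.trace_smul, Matrix.trace_sub, smul_eq_mul]
  rw [h1, h2]; ring

theorem tangential_normal_energy_split (n : Fin 3 → ℝ) (hn : vnormSq n = 1)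
    (X : Matrix (Fin 3) (Fin 3) ℝ) (hX : X.mulVec n = 0) (μ μc : ℝ) :
    Matrix.trace ((1 - outer n n) * X) = Matrix.trace X ∧
    normSq (outer n n * X) = vnormSq (Xᵀ.mulVec n) ∧
    μ * normSq (sym3 X) + μc * normSq (skew3 X)
      = μ * normSq (sym3 ((1 - outer n n) * X)) + μc * normSq (skew3 ((1 - outer n n) * X))
        + ((μ + μc)/2) * vnormSq (Xᵀ.mulVec n) := by
  set P := outer n n with hP
  have hn' : n 0 ^ 2 + n 1 ^ 2 + n 2 ^ 2 = 1 := by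
    simpa [vnormSq, Fin.sum_univ_three] using hn
  have hXr : ∀ i, X i 0 * n 0 + X i 1 * n 1 + X i 2 * n 2 = 0 := by
    intro i
    have := congrFun hX i
    simpa [Matrix.mulVec, dotProduct, Fin.sum_univ_three] using this
  have hPt : Pᵀ = P := by
    ext i j
    simp [hP, outer, Matrix.vecMulVec_apply, mul_comm]
  have hPP : P * P = P := by
    ext i j
    simp only [hP, Matrix.mul_apply, outer, Matrix.vecMulVec_apply, Fin.sum_univ_three]
    linear_combination (n i * n j) * hn'
  have hXP : X * P = 0 := by
    ext i j
    simp only [hP, Matrix.mul_apply, outer, Matrix.vecMulVec_apply, Fin.sum_univ_three,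
      Matrix.zero_apply]
    linear_combination (n j) * hXr i
  have hPXt : P * Xᵀ = 0 := by
    have := congrArg Matrix.transpose hXP
    simpa [Matrix.transpose_mul, hPt] using this
  -- key trace value
  have ht : Matrix.trace (P * (X * Xᵀ)) = vnormSq (Xᵀ.mulVec n) := by
    simp only [hP, Matrix.trace, Matrix.diag, Matrix.mul_apply, outer,
      Matrix.vecMulVec_apply, Matrix.transpose_apply, vnormSq, Matrix.mulVec,
      dotProduct, Fin.sum_univ_three]
    ring
  -- claim 1
  have c1 : Matrix.trace ((1 - P) * X) = Matrix.trace X := by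
    have : Matrix.trace (P * X) = 0 := by
      rw [Matrix.trace_mul_comm, hXP, Matrix.trace_zero]
    rw [Matrix.sub_mul, Matrix.one_mul, Matrix.trace_sub, this, sub_zero]
  -- claim 2
  have c2 : normSq (P * X) = vnormSq (Xᵀ.mulVec n) := by
    have h : P * X * (P * X)ᵀ = P * (X * Xᵀ) * P := by
      rw [Matrix.transpose_mul, hPt]; noncomm_ring
    rw [normSq, h, Matrix.trace_mul_comm, ← Matrix.mul_assoc, hPP, ht]
  refine ⟨c1, c2, ?_⟩
  -- claim 3
  set A := (1 - P) * X with hA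
  have hAX : A = X - P * X := by rw [hA, Matrix.sub_mul, Matrix.one_mul]
  have e1 : Matrix.trace (A * Aᵀ) = Matrix.trace (X * Xᵀ) - Matrix.trace (P * (X * Xᵀ)) := by
    rw [hAX]
    have h : (X - P * X) * (X - P * X)ᵀ
        = X * Xᵀ - X * (Xᵀ * P) - P * (X * Xᵀ) + P * (X * (Xᵀ * P)) := by
      simp only [Matrix.transpose_sub, Matrix.transpose_mul, hPt]
      noncomm_ring
    have tA : Matrix.trace (X * (Xᵀ * P)) = Matrix.trace (P * (X * Xᵀ)) := by
      rw [← Matrix.mul_assoc, Matrix.trace_mul_comm]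
    have tB : Matrix.trace (P * (X * (Xᵀ * P))) = Matrix.trace (P * (X * Xᵀ)) := by
      have h2 : P * (X * (Xᵀ * P)) = P * (X * Xᵀ) * P := by noncomm_ring
      rw [h2, Matrix.trace_mul_comm, ← Matrix.mul_assoc, hPP]
    rw [h, Matrix.trace_add, Matrix.trace_sub, Matrix.trace_sub, tA, tB]
    ring
  have e2 : Matrix.trace (A * A) = Matrix.trace (X * X) := by
    rw [hAX]
    have : (X - P * X) * (X - P * X)
        = X * X - X * (P * X) - P * (X * X) + P * (X * (P * X)) := by noncomm_ring
    rw [this]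
    have hXPX : X * (P * X) = 0 := by rw [← Matrix.mul_assoc, hXP, Matrix.zero_mul]
    rw [hXPX]
    have : Matrix.trace (P * (X * X)) = 0 := by
      rw [Matrix.trace_mul_comm, Matrix.mul_assoc, hXP, Matrix.mul_zero, Matrix.trace_zero]
    simp [this]
  rw [normSq_sym3 X, normSq_skew3 X, normSq_sym3 A, normSq_skew3 A, e1, e2, ← ht]
  ring

end
end

section
/- Homogenized membrane energy (solution of the through-thickness optimization): let μ > 0, μ_c > 0 and λ ∈ ℝ with 2μ + λ > 0, and define W(X) = μ‖sym X‖² + μ_c‖skew X‖² + (λ/2)·(tr X)². Let n ∈ ℝ³ with ‖n‖ = 1 and let E be a real 3×3 matrix with E n = 0, and set v* = −((μ − μ_c)/(μ + μ_c))·Eᵀn − (λ/(2μ + λ))·tr(E)·n. Then W(E + v*⊗n) = μ‖sym E∥‖² + μ_c‖skew E∥‖² + (λμ/(λ + 2μ))·(tr E)² + (2μμ_c/(μ + μ_c))·‖Eᵀn‖², and W(E + v⊗n) ≥ W(E + v*⊗n) for every v ∈ ℝ³; hence this expression equals the infimum of W(E + v⊗n) over v ∈ ℝ³. -/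
/-!
For `E n = 0` and `|n| = 1`, the map `v ↦ W(E + v ⊗ n)` is the quadratic polynomial
`W(E) + (μ - μc) ⟨v, Eᵀn⟩ + (μ + μc)/2 |v|² + (μ - μc + λ)/2 ⟨v, n⟩² + λ tr E ⟨v, n⟩`,
whose Hessian `(μ + μc)(1 - n ⊗ n) + (2μ + λ) n ⊗ n` is positive definite. Since `Eᵀn ⊥ n`, the
stationarity conditions split along `Eᵀn` and `n`, and `v*` is the stationary point. Hence
`W(E + (v* + u) ⊗ n)` exceeds the value at `v*` by the Hessian form of `u`, which is nonnegative by
Cauchy–Schwarz, while the value at `v*` is `W(E)` plus half the linear term at `v*`. Together with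
`|sym E∥|² = |sym E|² - |Eᵀn|²/2` (and the same for `skew`) this gives the closed form.
-/

open Matrix

noncomputable section

/-- The physically linear Cosserat strain energy. -/
def Wmp (μ μc lam : ℝ) (X : Matrix (Fin 3) (Fin 3) ℝ) : ℝ :=
  μ * normSq (sym3 X) + μc * normSq (skew3 X) + (lam/2) * (Matrix.trace X)^2

/-- The optimal through-thickness stretch direction. -/
def vstar (μ μc lam : ℝ) (n : Fin 3 → ℝ) (E : Matrix (Fin 3) (Fin 3) ℝ) : Fin 3 → ℝ :=
  fun i => -((μ - μc)/(μ + μc)) * (Eᵀ.mulVec n) i - (lam/(2*μ + lam)) * Matrix.trace E * n i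

lemma vnormSq_eq_dotProduct (v : Fin 3 → ℝ) : vnormSq v = v ⬝ᵥ v := by
  simp [vnormSq, dotProduct, sq]

lemma sq_dotProduct_le_of_dotProduct_self_eq_one {ι : Type*} [Fintype ι] {u n : ι → ℝ}
    (hn : n ⬝ᵥ n = 1) : (u ⬝ᵥ n) ^ 2 ≤ u ⬝ᵥ u :=
  calc (u ⬝ᵥ n) ^ 2 ≤ (u ⬝ᵥ u) * (n ⬝ᵥ n) := by
        simpa only [dotProduct, sq] using Finset.sum_mul_sq_le_sq_mul_sq Finset.univ u n
    _ = u ⬝ᵥ u := by rw [hn, mul_one]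

lemma normSq_sym3_add_outer (M : Matrix (Fin 3) (Fin 3) ℝ) (a b : Fin 3 → ℝ) :
    normSq (sym3 (M + outer a b)) = normSq (sym3 M) + a ⬝ᵥ M *ᵥ b + b ⬝ᵥ M *ᵥ a
      + ((a ⬝ᵥ a) * (b ⬝ᵥ b) + (a ⬝ᵥ b) ^ 2) / 2 := by
  simp only [normSq, sym3, outer, trace, diag, mul_apply, Matrix.add_apply, Matrix.smul_apply,
    transpose_apply, vecMulVec_apply, mulVec, dotProduct, Fin.sum_univ_three, smul_eq_mul]
  ring

lemma normSq_skew3_add_outer (M : Matrix (Fin 3) (Fin 3) ℝ) (a b : Fin 3 → ℝ) :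
    normSq (skew3 (M + outer a b)) = normSq (skew3 M) + a ⬝ᵥ M *ᵥ b - b ⬝ᵥ M *ᵥ a
      + ((a ⬝ᵥ a) * (b ⬝ᵥ b) - (a ⬝ᵥ b) ^ 2) / 2 := by
  simp only [normSq, skew3, outer, trace, diag, mul_apply, Matrix.add_apply, Matrix.sub_apply,
    Matrix.smul_apply, transpose_apply, vecMulVec_apply, mulVec, dotProduct, Fin.sum_univ_three,
    smul_eq_mul]
  ring

lemma trace_add_outer (M : Matrix (Fin 3) (Fin 3) ℝ) (a b : Fin 3 → ℝ) :
    trace (M + outer a b) = trace M + a ⬝ᵥ b := by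
  rw [outer, trace_add, trace_vecMulVec]

lemma Wmp_add_outer (μ μc lam : ℝ) (M : Matrix (Fin 3) (Fin 3) ℝ) (a b : Fin 3 → ℝ) :
    Wmp μ μc lam (M + outer a b) = Wmp μ μc lam M + (μ + μc) * (a ⬝ᵥ M *ᵥ b)
      + (μ - μc) * (b ⬝ᵥ M *ᵥ a) + (μ + μc) / 2 * ((a ⬝ᵥ a) * (b ⬝ᵥ b))
      + (μ - μc + lam) / 2 * (a ⬝ᵥ b) ^ 2 + lam * trace M * (a ⬝ᵥ b) := by
  rw [Wmp, Wmp, normSq_sym3_add_outer, normSq_skew3_add_outer, trace_add_outer]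
  ring

lemma one_sub_outer_self_mul (n : Fin 3 → ℝ) (M : Matrix (Fin 3) (Fin 3) ℝ) :
    (1 - outer n n) * M = M + outer (-n) (Mᵀ *ᵥ n) := by
  rw [sub_mul, one_mul, outer, outer, vecMulVec_mul, mulVec_transpose, neg_vecMulVec,
    sub_eq_add_neg]

lemma vstar_eq (μ μc lam : ℝ) (n : Fin 3 → ℝ) (E : Matrix (Fin 3) (Fin 3) ℝ) :
    vstar μ μc lam n E
      = (-((μ - μc) / (μ + μc))) • (Eᵀ *ᵥ n) + (-(lam * trace E / (2 * μ + lam))) • n := by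
  ext i
  simp only [vstar, neg_mul, neg_smul, Pi.add_apply, Pi.neg_apply, Pi.smul_apply, smul_eq_mul]
  ring

section

variable {μ μc lam : ℝ} {n : Fin 3 → ℝ} {E : Matrix (Fin 3) (Fin 3) ℝ}

lemma transpose_mulVec_dotProduct_eq_zero (hE : E *ᵥ n = 0) : Eᵀ *ᵥ n ⬝ᵥ n = 0 := by
  rw [dotProduct_comm, dotProduct_transpose_mulVec, hE, dotProduct_zero]

lemma Wmp_add_outer_of_mulVec_eq_zero (hn : n ⬝ᵥ n = 1) (hE : E *ᵥ n = 0) (v : Fin 3 → ℝ) :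
    Wmp μ μc lam (E + outer v n) = Wmp μ μc lam E + (μ - μc) * (v ⬝ᵥ Eᵀ *ᵥ n)
      + (μ + μc) / 2 * (v ⬝ᵥ v) + (μ - μc + lam) / 2 * (v ⬝ᵥ n) ^ 2
      + lam * trace E * (v ⬝ᵥ n) := by
  rw [Wmp_add_outer, hE, dotProduct_zero, hn, ← dotProduct_transpose_mulVec]
  ring

lemma normSq_sym3_tangential (hn : n ⬝ᵥ n = 1) (hE : E *ᵥ n = 0) :
    normSq (sym3 ((1 - outer n n) * E)) = normSq (sym3 E) - (Eᵀ *ᵥ n ⬝ᵥ Eᵀ *ᵥ n) / 2 := by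
  rw [one_sub_outer_self_mul, normSq_sym3_add_outer, ← dotProduct_transpose_mulVec E _ (-n)]
  simp only [mulVec_neg, dotProduct_neg, neg_dotProduct, neg_neg, hE, hn, dotProduct_zero,
    dotProduct_comm n, transpose_mulVec_dotProduct_eq_zero hE]
  ring

lemma normSq_skew3_tangential (hn : n ⬝ᵥ n = 1) (hE : E *ᵥ n = 0) :
    normSq (skew3 ((1 - outer n n) * E)) = normSq (skew3 E) - (Eᵀ *ᵥ n ⬝ᵥ Eᵀ *ᵥ n) / 2 := by
  rw [one_sub_outer_self_mul, normSq_skew3_add_outer, ← dotProduct_transpose_mulVec E _ (-n)]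
  simp only [mulVec_neg, dotProduct_neg, neg_dotProduct, neg_neg, hE, hn, dotProduct_zero,
    dotProduct_comm n, transpose_mulVec_dotProduct_eq_zero hE]
  ring

lemma Wmp_add_outer_stationary {α β : ℝ} (hα : (μ + μc) * α = -(μ - μc))
    (hβ : (2 * μ + lam) * β = -(lam * trace E)) (hn : n ⬝ᵥ n = 1) (hE : E *ᵥ n = 0) :
    Wmp μ μc lam (E + outer (α • (Eᵀ *ᵥ n) + β • n) n)
      = Wmp μ μc lam E + (μ - μc) / 2 * α * (Eᵀ *ᵥ n ⬝ᵥ Eᵀ *ᵥ n) + lam / 2 * trace E * β := by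
  have hmn := transpose_mulVec_dotProduct_eq_zero hE
  rw [Wmp_add_outer_of_mulVec_eq_zero hn hE]
  set m := Eᵀ *ᵥ n
  simp only [add_dotProduct, dotProduct_add, smul_dotProduct, dotProduct_smul, smul_eq_mul, hn,
    hmn, dotProduct_comm n m]
  linear_combination (α * (m ⬝ᵥ m) / 2) * hα + (β / 2) * hβ

lemma Wmp_add_outer_stationary_add {α β : ℝ} (hα : (μ + μc) * α = -(μ - μc))
    (hβ : (2 * μ + lam) * β = -(lam * trace E)) (hn : n ⬝ᵥ n = 1) (hE : E *ᵥ n = 0)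
    (u : Fin 3 → ℝ) :
    Wmp μ μc lam (E + outer (α • (Eᵀ *ᵥ n) + β • n + u) n)
      = Wmp μ μc lam (E + outer (α • (Eᵀ *ᵥ n) + β • n) n)
        + (μ + μc) / 2 * (u ⬝ᵥ u - (u ⬝ᵥ n) ^ 2) + (2 * μ + lam) / 2 * (u ⬝ᵥ n) ^ 2 := by
  have hmn := transpose_mulVec_dotProduct_eq_zero hE
  rw [Wmp_add_outer_of_mulVec_eq_zero hn hE, Wmp_add_outer_of_mulVec_eq_zero hn hE]
  set m := Eᵀ *ᵥ n
  simp only [add_dotProduct, dotProduct_add, smul_dotProduct, dotProduct_smul, smul_eq_mul, hn,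
    hmn, dotProduct_comm n m, dotProduct_comm m u, dotProduct_comm n u]
  linear_combination (u ⬝ᵥ m) * hα + (u ⬝ᵥ n) * hβ

lemma Wmp_vstar (hμμc : μ + μc ≠ 0) (hlam : 2 * μ + lam ≠ 0) (hn : n ⬝ᵥ n = 1)
    (hE : E *ᵥ n = 0) :
    Wmp μ μc lam (E + outer (vstar μ μc lam n E) n)
      = Wmp μ μc lam E - (μ - μc) ^ 2 / (2 * (μ + μc)) * (Eᵀ *ᵥ n ⬝ᵥ Eᵀ *ᵥ n)
        - lam ^ 2 / (2 * (2 * μ + lam)) * trace E ^ 2 := by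
  rw [vstar_eq, Wmp_add_outer_stationary (by field_simp) (by field_simp) hn hE]
  field_simp
  ring

lemma Wmp_vstar_add (hμμc : μ + μc ≠ 0) (hlam : 2 * μ + lam ≠ 0) (hn : n ⬝ᵥ n = 1)
    (hE : E *ᵥ n = 0) (u : Fin 3 → ℝ) :
    Wmp μ μc lam (E + outer (vstar μ μc lam n E + u) n)
      = Wmp μ μc lam (E + outer (vstar μ μc lam n E) n)
        + (μ + μc) / 2 * (u ⬝ᵥ u - (u ⬝ᵥ n) ^ 2) + (2 * μ + lam) / 2 * (u ⬝ᵥ n) ^ 2 := by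
  rw [vstar_eq]
  exact Wmp_add_outer_stationary_add (by field_simp) (by field_simp) hn hE u

lemma Wmp_vstar_le (hμ : 0 < μ) (hμc : 0 < μc) (hlam : 0 < 2 * μ + lam) (hn : n ⬝ᵥ n = 1)
    (hE : E *ᵥ n = 0) (v : Fin 3 → ℝ) :
    Wmp μ μc lam (E + outer (vstar μ μc lam n E) n) ≤ Wmp μ μc lam (E + outer v n) := by
  obtain ⟨u, rfl⟩ : ∃ u, v = vstar μ μc lam n E + u := ⟨v - vstar μ μc lam n E, by abel⟩
  rw [Wmp_vstar_add (add_pos hμ hμc).ne' hlam.ne' hn hE, add_assoc, le_add_iff_nonneg_right]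
  have hcs : (u ⬝ᵥ n) ^ 2 ≤ u ⬝ᵥ u := sq_dotProduct_le_of_dotProduct_self_eq_one hn
  exact add_nonneg (mul_nonneg (half_pos (add_pos hμ hμc)).le (sub_nonneg.2 hcs))
    (mul_nonneg (half_pos hlam).le (sq_nonneg _))

end

theorem homogenized_membrane_energy (μ μc lam : ℝ)
    (hμ : 0 < μ) (hμc : 0 < μc) (hlam : 0 < 2*μ + lam)
    (n : Fin 3 → ℝ) (hn : vnormSq n = 1)
    (E : Matrix (Fin 3) (Fin 3) ℝ) (hE : E.mulVec n = 0) :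
    Wmp μ μc lam (E + outer (vstar μ μc lam n E) n)
      = μ * normSq (sym3 ((1 - outer n n) * E)) + μc * normSq (skew3 ((1 - outer n n) * E))
        + (lam * μ/(lam + 2*μ)) * (Matrix.trace E)^2
        + (2*μ*μc/(μ + μc)) * vnormSq (Eᵀ.mulVec n) ∧
    (∀ v : Fin 3 → ℝ,
      Wmp μ μc lam (E + outer v n) ≥ Wmp μ μc lam (E + outer (vstar μ μc lam n E) n)) ∧
    (⨅ v : Fin 3 → ℝ, Wmp μ μc lam (E + outer v n))
      = Wmp μ μc lam (E + outer (vstar μ μc lam n E) n) := by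
  rw [vnormSq_eq_dotProduct] at hn
  have hmin := Wmp_vstar_le hμ hμc hlam hn hE
  refine ⟨?_, hmin, le_antisymm (ciInf_le ⟨_, Set.forall_mem_range.2 hmin⟩ _) (le_ciInf hmin)⟩
  have hμμc := (add_pos hμ hμc).ne'
  have htrace : lam / 2 - lam ^ 2 / (2 * (2 * μ + lam)) = lam * μ / (lam + 2 * μ) := by
    rw [add_comm lam]
    field_simp
    ring
  have hnormal : (μ - μc) ^ 2 / (2 * (μ + μc)) = (μ + μc) / 2 - 2 * μ * μc / (μ + μc) := by
    field_simp
    ring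
  rw [Wmp_vstar hμμc hlam.ne' hn hE, normSq_sym3_tangential hn hE, normSq_skew3_tangential hn hE,
    Wmp, vnormSq_eq_dotProduct]
  linear_combination trace E ^ 2 * htrace - (Eᵀ *ᵥ n ⬝ᵥ Eᵀ *ᵥ n) * hnormal

end
end

section
/- Two equivalent forms of the homogenized membrane energy: let μ, μ_c ∈ ℝ with μ + μ_c ≠ 0, let n ∈ ℝ³ with ‖n‖ = 1, and let E be a real 3×3 matrix with E n = 0. Then μ‖sym E∥‖² + μ_c‖skew E∥‖² + (2μμ_c/(μ + μ_c))·‖Eᵀn‖² = μ‖sym E‖² + μ_c‖skew E‖² − ((μ_c − μ)²/(2(μ_c + μ)))·‖Eᵀn‖², where E∥ = (1₃ − n⊗n)E. -/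
open Matrix

noncomputable section

theorem homogenized_membrane_energy_two_forms (μ μc : ℝ) (hμμc : μ + μc ≠ 0)
    (n : Fin 3 → ℝ) (hn : vnormSq n = 1)
    (E : Matrix (Fin 3) (Fin 3) ℝ) (hE : E.mulVec n = 0) :
    μ * normSq (sym3 ((1 - outer n n) * E)) + μc * normSq (skew3 ((1 - outer n n) * E))
      + (2*μ*μc/(μ + μc)) * vnormSq (Eᵀ.mulVec n)
    = μ * normSq (sym3 E) + μc * normSq (skew3 E)
      - ((μc - μ)^2/(2*(μc + μ))) * vnormSq (Eᵀ.mulVec n) := by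
  set P := outer n n with hPdef
  have hPt : Pᵀ = P := by
    ext i j
    simp [hPdef, outer, Matrix.vecMulVec_apply, Matrix.transpose_apply, mul_comm]
  have hEP : E * P = 0 := by
    ext i j
    have h := congrFun hE i
    simp [Matrix.mulVec, dotProduct, Fin.sum_univ_three] at h
    simp [hPdef, outer, Matrix.mul_apply, Matrix.vecMulVec_apply, Fin.sum_univ_three]
    linear_combination n j * h
  have hPEt : P * Eᵀ = 0 := by
    have h := congrArg Matrix.transpose hEP
    simpa [transpose_mul, hPt] using h
  have hPP : P * P = P := by
    ext i j
    have h := hn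
    simp [vnormSq, Fin.sum_univ_three] at h
    simp [hPdef, outer, Matrix.mul_apply, Matrix.vecMulVec_apply, Fin.sum_univ_three]
    linear_combination (n i * n j) * h
  set t := Matrix.trace (P * (E * Eᵀ)) with htdef
  have hT1 : t = vnormSq (Eᵀ.mulVec n) := by
    simp [htdef, hPdef, vnormSq, outer, Matrix.trace, Matrix.diag, Matrix.mul_apply,
      Matrix.vecMulVec_apply, Matrix.mulVec, dotProduct, Fin.sum_univ_three,
      Matrix.transpose_apply]
    ring
  have f1 : Matrix.trace (P * E * Eᵀ) = t := by rw [mul_assoc]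
  have f2 : Matrix.trace (Eᵀ * P * Eᵀ) = 0 := by
    rw [mul_assoc, hPEt, mul_zero, trace_zero]
  have f3 : Matrix.trace (E * (Eᵀ * P)) = t := by
    rw [← mul_assoc, trace_mul_comm]
  have f4 : Matrix.trace (P * E * (Eᵀ * P)) = t := by
    rw [show P * E * (Eᵀ * P) = P * (E * Eᵀ) * P by simp [mul_assoc],
      trace_mul_comm, ← mul_assoc, hPP]
  have f5 : Matrix.trace (Eᵀ * (Eᵀ * P)) = 0 := by
    rw [← mul_assoc, trace_mul_comm, ← mul_assoc, hPEt, zero_mul, trace_zero]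
  have f6 : Matrix.trace (Eᵀ * P * (Eᵀ * P)) = 0 := by
    rw [show Eᵀ * P * (Eᵀ * P) = Eᵀ * (P * Eᵀ) * P by simp [mul_assoc], hPEt]
    simp
  have f7 : Matrix.trace (P * E * E) = 0 := by
    rw [trace_mul_comm, ← mul_assoc, hEP, zero_mul, trace_zero]
  have f8 : Matrix.trace (Eᵀ * P * E) = t := by
    rw [trace_mul_comm]; exact f3
  have f9 : Matrix.trace (E * (P * E)) = 0 := by
    rw [← mul_assoc, hEP, zero_mul, trace_zero]
  have f10 : Matrix.trace (P * E * (P * E)) = 0 := by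
    rw [show P * E * (P * E) = P * (E * P) * E by simp [mul_assoc], hEP]
    simp
  have f11 : Matrix.trace (Eᵀ * (P * E)) = t := by
    rw [trace_mul_comm, mul_assoc]
  have f12 : Matrix.trace (Eᵀ * P * (P * E)) = t := by
    rw [show Eᵀ * P * (P * E) = Eᵀ * (P * P) * E by simp [mul_assoc], hPP]
    exact f8
  have g1 : Matrix.trace (Eᵀ * E) = Matrix.trace (E * Eᵀ) := trace_mul_comm _ _
  have g2 : Matrix.trace (Eᵀ * Eᵀ) = Matrix.trace (E * E) := by
    have h := Matrix.trace_transpose (E * E)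
    rw [transpose_mul] at h
    exact h
  have hsub : (1 - P) * E = E - P * E := by rw [sub_mul, one_mul]
  rw [hsub]
  have key1 : normSq (sym3 (E - P * E)) = normSq (sym3 E) - t / 2 := by
    simp only [normSq, sym3, transpose_smul, transpose_add, transpose_sub, transpose_mul,
      transpose_transpose, hPt, smul_mul_assoc, mul_smul_comm, trace_smul, sub_mul, mul_sub,
      add_mul, mul_add, trace_sub, trace_add, smul_eq_mul]
    rw [f1, f2, f3, f4, f5, f6, f7, f8, f9, f10, f11, f12, g1, g2]
    ring
  have key2 : normSq (skew3 (E - P * E)) = normSq (skew3 E) - t / 2 := by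
    simp only [normSq, skew3, transpose_smul, transpose_add, transpose_sub, transpose_mul,
      transpose_transpose, hPt, smul_mul_assoc, mul_smul_comm, trace_smul, sub_mul, mul_sub,
      add_mul, mul_add, trace_sub, trace_add, smul_eq_mul]
    rw [f1, f2, f3, f4, f5, f6, f7, f8, f9, f10, f11, f12, g1, g2]
    ring
  rw [key1, key2, ← hT1]
  have hμμc' : μc + μ ≠ 0 := by rwa [add_comm] at hμμc
  field_simp
  ring
end
end

section
/- Characterization of the homogenization minimizer by vanishing normal Biot stress: let μ > 0, μ_c > 0 and λ ∈ ℝ with 2μ + λ > 0; define W(X) = μ‖sym X‖² + μ_c‖skew X‖² + (λ/2)·(tr X)² and T_Biot(X) = 2μ·sym X + 2μ_c·skew X + λ·tr(X)·1₃. Let n ∈ ℝ³ with ‖n‖ = 1 and let E be a real 3×3 matrix with E n = 0. Then a vector v ∈ ℝ³ minimizes the map u ↦ W(E + u⊗n) over ℝ³ if and only if T_Biot(E + v⊗n)·n = 0; moreover the minimizer is unique. -/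
/-
The energy `W` is a quadratic form with differential `⟨T_Biot X, ·⟩`, so `u ↦ W(E + u ⊗ n)` is a
quadratic function of `u` with gradient `T_Biot(E + u ⊗ n) n` and quadratic part `W(u ⊗ n)`.
By Cauchy–Schwarz, `2 W(u ⊗ n) = (μ + μc)(|u|²|n|² - (u·n)²) + (2μ + λ)(u·n)²` is positive
definite, so the critical points are exactly the minimizers, and there is at most one. A critical
point exists because the acoustic tensor `Q u = T_Biot(u ⊗ n) n` satisfies `u · Q u = 2 W(u ⊗ n)`,
hence is injective, hence onto.
-/

open Matrix

noncomputable section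

/-- The Biot-type stress tensor (evaluated at the shifted stretch). -/
def TBiot (μ μc lam : ℝ) (X : Matrix (Fin 3) (Fin 3) ℝ) : Matrix (Fin 3) (Fin 3) ℝ :=
  (2*μ) • sym3 X + (2*μc) • skew3 X + (lam * Matrix.trace X) • (1 : Matrix (Fin 3) (Fin 3) ℝ)


section QuadraticExpansion

variable {ι : Type*} [Fintype ι] {f q : (ι → ℝ) → ℝ} {v g : ι → ℝ}

/-- Fermat's rule along each line `t ↦ v + t • w` kills the linear term. -/
theorem forall_le_iff_eq_zero_of_quadratic_expansion
    (hf : ∀ w, f (v + w) = f v + w ⬝ᵥ g + q w) (hq : ∀ w, 0 ≤ q w)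
    (hq_smul : ∀ (t : ℝ) w, q (t • w) = t ^ 2 * q w) :
    (∀ u, f v ≤ f u) ↔ g = 0 := by
  constructor
  · intro hmin
    suffices h : ∀ w, w ⬝ᵥ g = 0 from dotProduct_self_eq_zero.mp (h g)
    intro w
    have hlocal : IsLocalMin (fun t : ℝ => t * (w ⬝ᵥ g) + t ^ 2 * q w) 0 :=
      Filter.Eventually.of_forall fun t => by
        have := hmin (v + t • w)
        rw [hf, smul_dotProduct, hq_smul, smul_eq_mul] at this
        simp only
        linarith
    have hderiv : HasDerivAt (fun t : ℝ => t * (w ⬝ᵥ g) + t ^ 2 * q w) (w ⬝ᵥ g) 0 := by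
      simpa using ((hasDerivAt_id' (0 : ℝ)).mul_const (w ⬝ᵥ g)).fun_add
        ((hasDerivAt_pow 2 (0 : ℝ)).mul_const (q w))
    exact hlocal.hasDerivAt_eq_zero hderiv
  · rintro rfl u
    have := hf (u - v)
    rw [add_sub_cancel, dotProduct_zero, add_zero] at this
    linarith [hq (u - v)]

theorem lt_of_quadratic_expansion (hf : ∀ w, f (v + w) = f v + w ⬝ᵥ g + q w) (hg : g = 0)
    (hq : ∀ w, w ≠ 0 → 0 < q w) {u : ι → ℝ} (hu : u ≠ v) : f v < f u := by
  have := hf (u - v)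
  rw [add_sub_cancel, hg, dotProduct_zero, add_zero] at this
  linarith [hq (u - v) (sub_ne_zero.mpr hu)]

end QuadraticExpansion

theorem trace_mul_transpose_vecMulVec {m n R : Type*} [Fintype m] [Fintype n] [CommSemiring R]
    (A : Matrix m n R) (w : m → R) (x : n → R) :
    trace (A * (vecMulVec w x)ᵀ) = w ⬝ᵥ (A *ᵥ x) := by
  rw [transpose_vecMulVec, mul_vecMulVec, trace_vecMulVec, dotProduct_comm]

theorem vnormSq_pos {u : Fin 3 → ℝ} (hu : u ≠ 0) : 0 < vnormSq u := by
  have h : vnormSq u = u ⬝ᵥ u := by simp only [vnormSq, dotProduct, sq]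
  rw [h]
  exact lt_of_le_of_ne (Finset.sum_nonneg fun i _ => mul_self_nonneg (u i))
    (Ne.symm (dotProduct_self_eq_zero.not.mpr hu))

section Cosserat

variable (μ μc lam : ℝ)

theorem Wmp_add (X Y : Matrix (Fin 3) (Fin 3) ℝ) :
    Wmp μ μc lam (X + Y) = Wmp μ μc lam X + trace (TBiot μ μc lam X * Yᵀ) + Wmp μ μc lam Y := by
  simp only [Wmp, TBiot, sym3, skew3, normSq, trace, mul_apply, Fin.sum_univ_three, diag_apply,
    Matrix.smul_apply, Matrix.add_apply, Matrix.sub_apply, transpose_apply, one_apply, smul_eq_mul]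
  simp only [Fin.isValue, Fin.reduceEq, if_true, if_false]
  ring

theorem trace_TBiot_mul_transpose (X : Matrix (Fin 3) (Fin 3) ℝ) :
    trace (TBiot μ μc lam X * Xᵀ) = 2 * Wmp μ μc lam X := by
  simp only [Wmp, TBiot, sym3, skew3, normSq, trace, mul_apply, Fin.sum_univ_three, diag_apply,
    Matrix.smul_apply, Matrix.add_apply, Matrix.sub_apply, transpose_apply, one_apply, smul_eq_mul]
  simp only [Fin.isValue, Fin.reduceEq, if_true, if_false]
  ring

theorem Wmp_smul (t : ℝ) (X : Matrix (Fin 3) (Fin 3) ℝ) :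
    Wmp μ μc lam (t • X) = t ^ 2 * Wmp μ μc lam X := by
  simp only [Wmp, sym3, skew3, normSq, transpose_smul, trace_smul, ← smul_add, ← smul_sub,
    smul_mul_smul_comm, smul_eq_mul]
  ring

theorem TBiot_add (X Y : Matrix (Fin 3) (Fin 3) ℝ) :
    TBiot μ μc lam (X + Y) = TBiot μ μc lam X + TBiot μ μc lam Y := by
  simp only [TBiot, sym3, skew3, transpose_add, trace_add]
  module

theorem TBiot_smul (t : ℝ) (X : Matrix (Fin 3) (Fin 3) ℝ) :
    TBiot μ μc lam (t • X) = t • TBiot μ μc lam X := by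
  simp only [TBiot, sym3, skew3, transpose_smul, trace_smul, smul_eq_mul]
  module

theorem Wmp_add_outer_s17 (E : Matrix (Fin 3) (Fin 3) ℝ) (n v w : Fin 3 → ℝ) :
    Wmp μ μc lam (E + outer (v + w) n) =
      Wmp μ μc lam (E + outer v n) + w ⬝ᵥ (TBiot μ μc lam (E + outer v n) *ᵥ n) +
        Wmp μ μc lam (outer w n) := by
  rw [outer, add_vecMulVec, ← add_assoc, Wmp_add, trace_mul_transpose_vecMulVec]
  rfl

/-- Both terms are nonnegative by Cauchy–Schwarz. -/
theorem two_mul_Wmp_outer (u n : Fin 3 → ℝ) :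
    2 * Wmp μ μc lam (outer u n) =
      (μ + μc) * (vnormSq u * vnormSq n - (u ⬝ᵥ n) ^ 2) + (2 * μ + lam) * (u ⬝ᵥ n) ^ 2 := by
  simp only [Wmp, outer, vnormSq, dotProduct, sym3, skew3, normSq, trace, mul_apply,
    Fin.sum_univ_three, diag_apply, Matrix.smul_apply, Matrix.add_apply, Matrix.sub_apply,
    transpose_apply, vecMulVec_apply, smul_eq_mul]
  ring

def acousticTensor (n : Fin 3 → ℝ) : (Fin 3 → ℝ) →ₗ[ℝ] Fin 3 → ℝ where
  toFun u := TBiot μ μc lam (outer u n) *ᵥ n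
  map_add' u v := by simp only [outer, add_vecMulVec, TBiot_add, add_mulVec]
  map_smul' t u := by simp only [outer, smul_vecMulVec, TBiot_smul, smul_mulVec, RingHom.id_apply]

theorem TBiot_add_outer_mulVec (E : Matrix (Fin 3) (Fin 3) ℝ) (v n : Fin 3 → ℝ) :
    TBiot μ μc lam (E + outer v n) *ᵥ n = TBiot μ μc lam E *ᵥ n + acousticTensor μ μc lam n v := by
  rw [TBiot_add, add_mulVec]
  rfl

theorem dotProduct_acousticTensor (n u : Fin 3 → ℝ) :
    u ⬝ᵥ acousticTensor μ μc lam n u = 2 * Wmp μ μc lam (outer u n) := by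
  rw [← trace_TBiot_mul_transpose, outer, trace_mul_transpose_vecMulVec]
  rfl

variable {μ μc lam}

theorem Wmp_outer_nonneg (hμ : 0 ≤ μ + μc) (hlam : 0 ≤ 2 * μ + lam)
    (u n : Fin 3 → ℝ) : 0 ≤ Wmp μ μc lam (outer u n) := by
  have hcs : (u ⬝ᵥ n) ^ 2 ≤ vnormSq u * vnormSq n := Finset.sum_mul_sq_le_sq_mul_sq _ u n
  have := two_mul_Wmp_outer μ μc lam u n
  linarith [mul_nonneg hμ (sub_nonneg.mpr hcs), mul_nonneg hlam (sq_nonneg (u ⬝ᵥ n))]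

theorem Wmp_outer_pos (hμ : 0 < μ + μc) (hlam : 0 < 2 * μ + lam)
    {u n : Fin 3 → ℝ} (hu : u ≠ 0) (hn : n ≠ 0) : 0 < Wmp μ μc lam (outer u n) := by
  have hcs : (u ⬝ᵥ n) ^ 2 ≤ vnormSq u * vnormSq n := Finset.sum_mul_sq_le_sq_mul_sq _ u n
  have hun : 0 < vnormSq u * vnormSq n := mul_pos (vnormSq_pos hu) (vnormSq_pos hn)
  have := two_mul_Wmp_outer μ μc lam u n
  rcases (sq_nonneg (u ⬝ᵥ n)).eq_or_lt with h0 | hpos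
  · rw [← h0, sub_zero] at this
    linarith [mul_pos hμ hun]
  · linarith [mul_nonneg hμ.le (sub_nonneg.mpr hcs), mul_pos hlam hpos]

theorem acousticTensor_surjective (hμ : 0 < μ + μc) (hlam : 0 < 2 * μ + lam) {n : Fin 3 → ℝ}
    (hn : n ≠ 0) : Function.Surjective (acousticTensor μ μc lam n) := by
  have hinj : Function.Injective (acousticTensor μ μc lam n) := by
    rw [← LinearMap.ker_eq_bot, LinearMap.ker_eq_bot']
    intro u hu
    by_contra hne
    have := dotProduct_acousticTensor μ μc lam n u
    rw [hu, dotProduct_zero] at this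
    linarith [Wmp_outer_pos hμ hlam hne hn]
  exact LinearMap.injective_iff_surjective.mp hinj

end Cosserat

theorem minimizer_iff_zero_normal_biot_stress_general (μ μc lam : ℝ)
    (hμ : 0 < μ) (hμc : 0 < μc) (hlam : 0 < 2*μ + lam)
    (n : Fin 3 → ℝ) (hn : vnormSq n = 1)
    (E : Matrix (Fin 3) (Fin 3) ℝ) :
    (∀ v : Fin 3 → ℝ,
      ((∀ u : Fin 3 → ℝ, Wmp μ μc lam (E + outer u n) ≥ Wmp μ μc lam (E + outer v n)) ↔
        (TBiot μ μc lam (E + outer v n)).mulVec n = 0)) ∧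
    (∃! v : Fin 3 → ℝ,
      ∀ u : Fin 3 → ℝ, Wmp μ μc lam (E + outer u n) ≥ Wmp μ μc lam (E + outer v n)) := by
  have hμμc : 0 < μ + μc := add_pos hμ hμc
  have hn0 : n ≠ 0 := by
    rintro rfl
    simp [vnormSq] at hn
  have hiff : ∀ v : Fin 3 → ℝ,
      ((∀ u, Wmp μ μc lam (E + outer v n) ≤ Wmp μ μc lam (E + outer u n)) ↔
        TBiot μ μc lam (E + outer v n) *ᵥ n = 0) := fun v =>
    forall_le_iff_eq_zero_of_quadratic_expansion (f := fun u => Wmp μ μc lam (E + outer u n))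
      (Wmp_add_outer_s17 μ μc lam E n v)
      (fun w => Wmp_outer_nonneg hμμc.le hlam.le w n)
      (fun t w => by rw [outer, smul_vecMulVec, Wmp_smul]; rfl)
  refine ⟨hiff, ?_⟩
  obtain ⟨v₀, hv₀⟩ := acousticTensor_surjective hμμc hlam hn0 (-(TBiot μ μc lam E *ᵥ n))
  have hcrit : TBiot μ μc lam (E + outer v₀ n) *ᵥ n = 0 := by
    rw [TBiot_add_outer_mulVec, hv₀, add_neg_cancel]
  refine ⟨v₀, (hiff v₀).mpr hcrit, fun v hv => ?_⟩
  by_contra hne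
  exact (hv v₀).not_gt (lt_of_quadratic_expansion (f := fun u => Wmp μ μc lam (E + outer u n))
    (Wmp_add_outer_s17 μ μc lam E n v₀) hcrit
    (fun w hw => Wmp_outer_pos hμμc hlam hw hn0) hne)

theorem minimizer_iff_zero_normal_biot_stress (μ μc lam : ℝ)
    (hμ : 0 < μ) (hμc : 0 < μc) (hlam : 0 < 2*μ + lam)
    (n : Fin 3 → ℝ) (hn : vnormSq n = 1)
    (E : Matrix (Fin 3) (Fin 3) ℝ) (hE : E.mulVec n = 0) :
    (∀ v : Fin 3 → ℝ,
      ((∀ u : Fin 3 → ℝ, Wmp μ μc lam (E + outer u n) ≥ Wmp μ μc lam (E + outer v n)) ↔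
        (TBiot μ μc lam (E + outer v n)).mulVec n = 0)) ∧
    (∃! v : Fin 3 → ℝ,
      ∀ u : Fin 3 → ℝ, Wmp μ μc lam (E + outer u n) ≥ Wmp μ μc lam (E + outer v n)) :=
  minimizer_iff_zero_normal_biot_stress_general μ μc lam hμ hμc hlam n hn E

end
end

section
/- Homogenized curvature energy: let b₁, b₂, b₃ > 0, let n ∈ ℝ³ with ‖n‖ = 1, and let K be a real 3×3 matrix with K n = 0. Define W_c(X) = b₁‖sym X‖² + b₂‖skew X‖² + b₃·(tr X)². Then the infimum over v ∈ ℝ³ of W_c(K + v⊗n) equals b₁‖sym K∥‖² + b₂‖skew K∥‖² + (b₁b₃/(b₁ + b₃))·(tr K)² + (2b₁b₂/(b₁ + b₂))·‖Kᵀn‖², and it is attained at v = −((b₁ − b₂)/(b₁ + b₂))·Kᵀn − (b₃/(b₁ + b₃))·tr(K)·n, where K∥ = (1₃ − n⊗n)K. -/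
open Matrix

noncomputable section

/-- The quadratic curvature energy. -/
def Wc (b₁ b₂ b₃ : ℝ) (X : Matrix (Fin 3) (Fin 3) ℝ) : ℝ :=
  b₁ * normSq (sym3 X) + b₂ * normSq (skew3 X) + b₃ * (Matrix.trace X)^2

private lemma key_identity (b₁ b₂ b₃ : ℝ) (n : Fin 3 → ℝ) (hn : vnormSq n = 1)
    (K : Matrix (Fin 3) (Fin 3) ℝ) (hK : K.mulVec n = 0) (v : Fin 3 → ℝ) :
    (b₁+b₂)*(b₁+b₃) * Wc b₁ b₂ b₃ (K + outer v n)
      = (b₁+b₂)*(b₁+b₃) * (b₁ * normSq (sym3 ((1 - outer n n) * K))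
          + b₂ * normSq (skew3 ((1 - outer n n) * K)))
        + (b₁+b₂)*(b₁*b₃) * (Matrix.trace K)^2
        + (b₁+b₃)*(2*b₁*b₂) * vnormSq (Kᵀ.mulVec n)
        + (b₁+b₃)/2 * vnormSq (fun i => (b₁+b₂) * (v i - (∑ j, v j * n j) * n i)
            + (b₁-b₂) * (Kᵀ.mulVec n) i)
        + (b₁+b₂) * ((b₁+b₃) * (∑ j, v j * n j) + b₃ * Matrix.trace K)^2 := by
  have h0 := congrFun hK 0
  have h1 := congrFun hK 1
  have h2 := congrFun hK 2
  simp [Matrix.mulVec, dotProduct, Fin.sum_univ_three] at h0 h1 h2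
  have hn' : n 0 ^ 2 + n 1 ^ 2 + n 2 ^ 2 = 1 := by
    simpa [vnormSq, Fin.sum_univ_three] using hn
  simp only [Wc, normSq, vnormSq, sym3, skew3, outer, Matrix.trace, Matrix.diag,
    Matrix.mul_apply, Matrix.add_apply, Matrix.sub_apply, Matrix.smul_apply,
    Matrix.transpose_apply, Matrix.one_apply, Matrix.vecMulVec_apply, Matrix.mulVec,
    dotProduct, Fin.sum_univ_three, smul_eq_mul]
  norm_num [Fin.ext_iff]
  linear_combination
    ((b₁+b₂)*(b₁+b₃)*(b₁+b₂)*((v 0^2+v 1^2+v 2^2) - ((K 0 0*n 0+K 1 0*n 1+K 2 0*n 2)^2+(K 0 1*n 0+K 1 1*n 1+K 2 1*n 2)^2+(K 0 2*n 0+K 1 2*n 1+K 2 2*n 2)^2))/2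
      - (b₁+b₃)*(b₁+b₂)^2*(v 0*n 0+v 1*n 1+v 2*n 2)^2/2) * hn'
    + ((b₁+b₂)*(b₁+b₃)*(b₁+b₂)*v 0 + (b₁+b₂)*(b₁+b₃)*(b₁-b₂)*(K 0 0*n 0+K 1 0*n 1+K 2 0*n 2) - (b₁+b₂)*(b₁+b₃)*(b₁-b₂)*((K 0 0*n 0+K 1 0*n 1+K 2 0*n 2)*n 0+(K 0 1*n 0+K 1 1*n 1+K 2 1*n 2)*n 1+(K 0 2*n 0+K 1 2*n 1+K 2 2*n 2)*n 2)*n 0/2 + (b₁+b₃)*(b₁+b₂)*(b₁-b₂)*(v 0*n 0+v 1*n 1+v 2*n 2)*n 0) * h0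
    + ((b₁+b₂)*(b₁+b₃)*(b₁+b₂)*v 1 + (b₁+b₂)*(b₁+b₃)*(b₁-b₂)*(K 0 1*n 0+K 1 1*n 1+K 2 1*n 2) - (b₁+b₂)*(b₁+b₃)*(b₁-b₂)*((K 0 0*n 0+K 1 0*n 1+K 2 0*n 2)*n 0+(K 0 1*n 0+K 1 1*n 1+K 2 1*n 2)*n 1+(K 0 2*n 0+K 1 2*n 1+K 2 2*n 2)*n 2)*n 1/2 + (b₁+b₃)*(b₁+b₂)*(b₁-b₂)*(v 0*n 0+v 1*n 1+v 2*n 2)*n 1) * h1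
    + ((b₁+b₂)*(b₁+b₃)*(b₁+b₂)*v 2 + (b₁+b₂)*(b₁+b₃)*(b₁-b₂)*(K 0 2*n 0+K 1 2*n 1+K 2 2*n 2) - (b₁+b₂)*(b₁+b₃)*(b₁-b₂)*((K 0 0*n 0+K 1 0*n 1+K 2 0*n 2)*n 0+(K 0 1*n 0+K 1 1*n 1+K 2 1*n 2)*n 1+(K 0 2*n 0+K 1 2*n 1+K 2 2*n 2)*n 2)*n 2/2 + (b₁+b₃)*(b₁+b₂)*(b₁-b₂)*(v 0*n 0+v 1*n 1+v 2*n 2)*n 2) * h2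

theorem homogenized_curvature_energy (b₁ b₂ b₃ : ℝ)
    (hb₁ : 0 < b₁) (hb₂ : 0 < b₂) (hb₃ : 0 < b₃)
    (n : Fin 3 → ℝ) (hn : vnormSq n = 1)
    (K : Matrix (Fin 3) (Fin 3) ℝ) (hK : K.mulVec n = 0) :
    (⨅ v : Fin 3 → ℝ, Wc b₁ b₂ b₃ (K + outer v n))
      = b₁ * normSq (sym3 ((1 - outer n n) * K)) + b₂ * normSq (skew3 ((1 - outer n n) * K))
        + (b₁*b₃/(b₁ + b₃)) * (Matrix.trace K)^2
        + (2*b₁*b₂/(b₁ + b₂)) * vnormSq (Kᵀ.mulVec n) ∧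
    Wc b₁ b₂ b₃
        (K + outer (fun i => -((b₁ - b₂)/(b₁ + b₂)) * (Kᵀ.mulVec n) i
          - (b₃/(b₁ + b₃)) * Matrix.trace K * n i) n)
      = b₁ * normSq (sym3 ((1 - outer n n) * K)) + b₂ * normSq (skew3 ((1 - outer n n) * K))
        + (b₁*b₃/(b₁ + b₃)) * (Matrix.trace K)^2
        + (2*b₁*b₂/(b₁ + b₂)) * vnormSq (Kᵀ.mulVec n) := by
  have hb12 : (0:ℝ) < b₁ + b₂ := by linarith
  have hb13 : (0:ℝ) < b₁ + b₃ := by linarith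
  have hb12' : (b₁ + b₂ : ℝ) ≠ 0 := ne_of_gt hb12
  have hb13' : (b₁ + b₃ : ℝ) ≠ 0 := ne_of_gt hb13
  have hP : (0:ℝ) < (b₁+b₂)*(b₁+b₃) := mul_pos hb12 hb13
  set T : ℝ := b₁ * normSq (sym3 ((1 - outer n n) * K)) + b₂ * normSq (skew3 ((1 - outer n n) * K))
        + (b₁*b₃/(b₁ + b₃)) * (Matrix.trace K)^2
        + (2*b₁*b₂/(b₁ + b₂)) * vnormSq (Kᵀ.mulVec n) with hT
  have hPT : (b₁+b₂)*(b₁+b₃) * T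
      = (b₁+b₂)*(b₁+b₃) * (b₁ * normSq (sym3 ((1 - outer n n) * K))
          + b₂ * normSq (skew3 ((1 - outer n n) * K)))
        + (b₁+b₂)*(b₁*b₃) * (Matrix.trace K)^2
        + (b₁+b₃)*(2*b₁*b₂) * vnormSq (Kᵀ.mulVec n) := by
    rw [hT]; field_simp
  -- lower bound
  have lower : ∀ v : Fin 3 → ℝ, T ≤ Wc b₁ b₂ b₃ (K + outer v n) := by
    intro v
    have hk := key_identity b₁ b₂ b₃ n hn K hK v
    have h1 : 0 ≤ vnormSq (fun i => (b₁+b₂) * (v i - (∑ j, v j * n j) * n i)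
        + (b₁-b₂) * (Kᵀ.mulVec n) i) := by
      unfold vnormSq; positivity
    have h2 : 0 ≤ (b₁+b₂) * ((b₁+b₃) * (∑ j, v j * n j) + b₃ * Matrix.trace K)^2 := by positivity
    have h3 : (b₁+b₂)*(b₁+b₃) * T ≤ (b₁+b₂)*(b₁+b₃) * Wc b₁ b₂ b₃ (K + outer v n) := by
      rw [hPT, hk]; nlinarith [h1, h2, hb13]
    exact le_of_mul_le_mul_left h3 hP
  -- the minimizer
  set vs : Fin 3 → ℝ := fun i => -((b₁ - b₂)/(b₁ + b₂)) * (Kᵀ.mulVec n) i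
          - (b₃/(b₁ + b₃)) * Matrix.trace K * n i with hvs
  have h0 := congrFun hK 0
  have h1 := congrFun hK 1
  have h2 := congrFun hK 2
  simp [Matrix.mulVec, dotProduct, Fin.sum_univ_three] at h0 h1 h2
  have hn' : n 0 ^ 2 + n 1 ^ 2 + n 2 ^ 2 = 1 := by
    simpa [vnormSq, Fin.sum_univ_three] using hn
  have hmn : (Kᵀ.mulVec n) 0 * n 0 + (Kᵀ.mulVec n) 1 * n 1 + (Kᵀ.mulVec n) 2 * n 2 = 0 := by
    simp only [Matrix.mulVec, dotProduct, Matrix.transpose_apply, Fin.sum_univ_three]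
    linear_combination n 0 * h0 + n 1 * h1 + n 2 * h2
  have ht : (∑ j, vs j * n j) = -(b₃/(b₁+b₃)) * Matrix.trace K := by
    rw [hvs]
    simp only [Fin.sum_univ_three]
    linear_combination (-((b₁-b₂)/(b₁+b₂))) * hmn + (-(b₃/(b₁+b₃))*Matrix.trace K) * hn'
  have hres : (fun i => (b₁+b₂) * (vs i - (∑ j, vs j * n j) * n i)
      + (b₁-b₂) * (Kᵀ.mulVec n) i) = fun _ => (0:ℝ) := by
    funext i
    rw [ht, hvs]
    field_simp
    ring
  have hscal : (b₁+b₃) * (∑ j, vs j * n j) + b₃ * Matrix.trace K = 0 := by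
    rw [ht]; field_simp; ring
  have hkv := key_identity b₁ b₂ b₃ n hn K hK vs
  rw [hres, hscal] at hkv
  have hz : vnormSq (fun _ : Fin 3 => (0:ℝ)) = 0 := by simp [vnormSq]
  rw [hz] at hkv
  have hmin : Wc b₁ b₂ b₃ (K + outer vs n) = T := by
    have : (b₁+b₂)*(b₁+b₃) * Wc b₁ b₂ b₃ (K + outer vs n) = (b₁+b₂)*(b₁+b₃) * T := by
      rw [hkv, hPT]; ring
    exact mul_left_cancel₀ (ne_of_gt hP) this
  constructor
  · refine le_antisymm ?_ (le_ciInf lower)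
    calc (⨅ v : Fin 3 → ℝ, Wc b₁ b₂ b₃ (K + outer v n))
        ≤ Wc b₁ b₂ b₃ (K + outer vs n) := by
          apply ciInf_le
          exact ⟨T, by rintro x ⟨v, rfl⟩; exact lower v⟩
      _ = T := hmin
  · exact hmin

end
end
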